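/- arXiv:1008.2394 — 2 statements merged into one kernel-verified Lean document; each statement's English description precedes it below -/
import Mathlib

section
/- Let W be a projective variety defined over a number field K, let φ : W → W be a dominant endomorphism defined over K, let D be an ample divisor on W, and let μ₁ = μ₁(φ,D) and μ₂ = μ₂(φ,D) be the height expansion and contraction coefficients of φ for D. Then for every ε > 0 there exist constants C₁, C₂ such that (μ₁ − ε)·h_D(P) − C₁ ≤ h_D(φ(P)) ≤ (μ₂ + ε)·h_D(P) + C₂ for all P ∈ W(K̄). In particular every dominant endomorphism satisfies the weak Northcott property. -/
/-!
Abstract setup for a projective variety `W` defined over a number field `K`: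

* `Point` is the set `W(K̄)` of algebraic points, carrying the Zariski topology;
* `Pic` is the real Picard group `Pic(W) ⊗ ℝ`, with its ample cone `IsAmple`;
* `height D P` is a choice of Weil height function `h_D : W(K̄) → ℝ` for each class `D`,
  satisfying the standard properties of the Weil height machine (additivity and
  ℝ-homogeneity up to bounded functions, boundedness below for ample classes,
  and functoriality `h_D ∘ φ = h_{φ*D} + O(1)` for a morphism `φ` with pullback `φ*`).

A morphism `φ : W → W` is dominant if its image is Zariski dense.
-/

/-- The height expansion coefficient `μ₁(φ, D) = sup {α | φ*D - α•D is ample}`. -/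
noncomputable def heightExpansionCoeff {Pic : Type*} [AddCommGroup Pic] [Module ℝ Pic]
    (IsAmple : Pic → Prop) (φpull : Pic →ₗ[ℝ] Pic) (D : Pic) : ℝ :=
  sSup {α : ℝ | IsAmple (φpull D - α • D)}

/-- The height contraction coefficient `μ₂(φ, D) = inf {α | α•D - φ*D is ample}`. -/
noncomputable def heightContractionCoeff {Pic : Type*} [AddCommGroup Pic] [Module ℝ Pic]
    (IsAmple : Pic → Prop) (φpull : Pic →ₗ[ℝ] Pic) (D : Pic) : ℝ :=
  sInf {α : ℝ | IsAmple (α • D - φpull D)}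

/-- Let `W` be a projective variety defined over a number field `K`,
let `φ : W → W` be a dominant endomorphism defined over `K`, let `D` be an ample divisor
on `W`, and let `μ₁ = μ₁(φ,D)`, `μ₂ = μ₂(φ,D)` be the height expansion and contraction
coefficients of `φ` for `D`.  Then for every `ε > 0` there exist constants `C₁, C₂` such
that `(μ₁ - ε) * h_D(P) - C₁ ≤ h_D(φ(P)) ≤ (μ₂ + ε) * h_D(P) + C₂` for all `P ∈ W(K̄)`;
in particular `φ` satisfies the weak Northcott property. -/
theorem weak_northcott_of_dominant
    {Point : Type*} [TopologicalSpace Point]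
    {Pic : Type*} [AddCommGroup Pic] [Module ℝ Pic]
    (IsAmple : Pic → Prop)
    (isAmple_add : ∀ {D E : Pic}, IsAmple D → IsAmple E → IsAmple (D + E))
    (isAmple_smul : ∀ {D : Pic} {t : ℝ}, 0 < t → IsAmple D → IsAmple (t • D))
    (isAmple_open : ∀ {D : Pic} (E : Pic), IsAmple D →
      ∃ ε > 0, ∀ t : ℝ, |t| ≤ ε → IsAmple (D + t • E))
    (height : Pic → Point → ℝ)
    (height_add : ∀ D E : Pic, ∃ C : ℝ, ∀ P : Point,
      |height (D + E) P - (height D P + height E P)| ≤ C)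
    (height_smul : ∀ (t : ℝ) (D : Pic), ∃ C : ℝ, ∀ P : Point,
      |height (t • D) P - t * height D P| ≤ C)
    (height_lower : ∀ D : Pic, IsAmple D → ∃ C : ℝ, ∀ P : Point, -C ≤ height D P)
    (φ : Point → Point) (hφcont : Continuous φ) (hφdom : DenseRange φ)
    (φpull : Pic →ₗ[ℝ] Pic)
    (height_pull : ∀ D : Pic, ∃ C : ℝ, ∀ P : Point,
      |height D (φ P) - height (φpull D) P| ≤ C)
    (D : Pic) (hD : IsAmple D) :
    ∀ ε > 0, ∃ C₁ C₂ : ℝ, ∀ P : Point,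
      (heightExpansionCoeff IsAmple φpull D - ε) * height D P - C₁ ≤ height D (φ P) ∧
      height D (φ P) ≤ (heightContractionCoeff IsAmple φpull D + ε) * height D P + C₂ := by
  intro ε hε
  -- the sets defining μ₁ and μ₂ are nonempty
  obtain ⟨δ, hδ, hopen⟩ := isAmple_open (φpull D) hD
  have hS₁ne : Set.Nonempty {α : ℝ | IsAmple (φpull D - α • D)} := by
    refine ⟨-(1/δ), ?_⟩
    have h1 : IsAmple (D + δ • φpull D) := hopen δ (by rw [abs_of_pos hδ])
    have h2 : IsAmple ((1/δ) • (D + δ • φpull D)) := isAmple_smul (by positivity) h1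
    have heq : φpull D - (-(1/δ)) • D = (1/δ) • (D + δ • φpull D) := by
      match_scalars <;> field_simp
    rw [Set.mem_setOf_eq, heq]; exact h2
  have hS₂ne : Set.Nonempty {α : ℝ | IsAmple (α • D - φpull D)} := by
    refine ⟨1/δ, ?_⟩
    have h1 : IsAmple (D + (-δ) • φpull D) := hopen (-δ) (by rw [abs_neg, abs_of_pos hδ])
    have h2 : IsAmple ((1/δ) • (D + (-δ) • φpull D)) := isAmple_smul (by positivity) h1
    have heq : (1/δ) • D - φpull D = (1/δ) • (D + (-δ) • φpull D) := by
      match_scalars <;> field_simp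
    rw [Set.mem_setOf_eq, heq]; exact h2
  obtain ⟨a, haS, ha⟩ := Real.add_neg_lt_sSup hS₁ne (ε := -ε) (by linarith)
  obtain ⟨b, hbS, hb⟩ := Real.lt_sInf_add_pos hS₂ne hε
  have hμ₁ : heightExpansionCoeff IsAmple φpull D - ε < a := by
    simpa [heightExpansionCoeff, sub_eq_add_neg] using ha
  have hμ₂ : b < heightContractionCoeff IsAmple φpull D + ε := by
    simpa [heightContractionCoeff] using hb
  obtain ⟨c₀, hc₀⟩ := height_lower D hD
  obtain ⟨c₁, hc₁⟩ := height_lower _ haS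
  obtain ⟨c₂, hc₂⟩ := height_lower _ hbS
  obtain ⟨cA, hcA⟩ := height_add (φpull D - a • D) (a • D)
  obtain ⟨cS, hcS⟩ := height_smul a D
  obtain ⟨cA', hcA'⟩ := height_add (b • D - φpull D) (φpull D)
  obtain ⟨cS', hcS'⟩ := height_smul b D
  obtain ⟨cP, hcP⟩ := height_pull D
  set μ₁ := heightExpansionCoeff IsAmple φpull D with hμ₁def
  set μ₂ := heightContractionCoeff IsAmple φpull D with hμ₂def
  refine ⟨c₁ + cA + cS + cP + (a - (μ₁ - ε)) * c₀,
          c₂ + cA' + cS' + cP + ((μ₂ + ε) - b) * c₀, fun P => ?_⟩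
  have h0 := hc₀ P
  have h1 := hc₁ P
  have h2 := hc₂ P
  have hA := hcA P
  rw [sub_add_cancel] at hA
  have hA' := hcA' P
  rw [sub_add_cancel] at hA'
  have hS := hcS P
  have hS' := hcS' P
  have hP := hcP P
  rw [abs_le] at hA hA' hS hS' hP
  constructor
  · nlinarith [mul_nonneg (by linarith : (0:ℝ) ≤ a - (μ₁ - ε))
      (by linarith : (0:ℝ) ≤ height D P + c₀)]
  · nlinarith [mul_nonneg (by linarith : (0:ℝ) ≤ (μ₂ + ε) - b)
      (by linarith : (0:ℝ) ≤ height D P + c₀)]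
end

section
/- Let φ : W → W be a dominant endomorphism of a projective variety W defined over a number field K, and suppose the global height expansion coefficient satisfies μ(φ) > 1. Then for every ample divisor E on W, the set of preperiodic points Preper(φ) is a set of bounded height with respect to h_E. -/
/-- The global height expansion coefficient `μ(φ) = sup {μ₁(φ,D) | D ample}`. -/
noncomputable def globalHeightExpansionCoeff {Pic : Type*} [AddCommGroup Pic] [Module ℝ Pic]
    (IsAmple : Pic → Prop) (φpull : Pic →ₗ[ℝ] Pic) : ℝ :=
  sSup {x : ℝ | ∃ D : Pic, IsAmple D ∧ x = heightExpansionCoeff IsAmple φpull D}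

/-- A point `P` is preperiodic for `φ` if its forward orbit `{φⁿ(P) : n ≥ 0}` is finite. -/
def IsPreperiodic {Point : Type*} (φ : Point → Point) (P : Point) : Prop :=
  (Set.range fun n : ℕ => φ^[n] P).Finite

-- `0 ≤ a` excludes the junk value `sSup s = 0` of an empty or unbounded `s`.
theorem Real.exists_mem_lt_of_lt_sSup {s : Set ℝ} {a : ℝ} (ha : 0 ≤ a) (h : a < sSup s) :
    ∃ x ∈ s, a < x := by
  by_contra! hs
  exact (Real.sSup_le hs ha).not_gt h

section ExpansionCoeff

variable {Pic : Type*} [AddCommGroup Pic] [Module ℝ Pic] {IsAmple : Pic → Prop}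
  {φpull : Pic →ₗ[ℝ] Pic}

theorem exists_isAmple_one_lt_heightExpansionCoeff
    (hμ : 1 < globalHeightExpansionCoeff IsAmple φpull) :
    ∃ D, IsAmple D ∧ 1 < heightExpansionCoeff IsAmple φpull D := by
  obtain ⟨_, ⟨D, hD, rfl⟩, hlt⟩ := Real.exists_mem_lt_of_lt_sSup zero_le_one hμ
  exact ⟨D, hD, hlt⟩

theorem exists_one_lt_isAmple_pull_sub_smul {D : Pic}
    (hD : 1 < heightExpansionCoeff IsAmple φpull D) :
    ∃ α : ℝ, 1 < α ∧ IsAmple (φpull D - α • D) := by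
  obtain ⟨α, hα, hlt⟩ := Real.exists_mem_lt_of_lt_sSup zero_le_one hD
  exact ⟨α, hlt, hα⟩

end ExpansionCoeff

section Iterate

variable {X : Type*} {f : X → X} {h : X → ℝ} {α B : ℝ}

theorem pow_mul_sub_le_iterate_sub (hα : 0 ≤ α) (hf : ∀ x, α * (h x - B) ≤ h (f x) - B)
    (x : X) (n : ℕ) : α ^ n * (h x - B) ≤ h (f^[n] x) - B := by
  induction n with
  | zero => simp
  | succ n ih =>
    rw [Function.iterate_succ_apply', pow_succ', mul_assoc]
    exact (mul_le_mul_of_nonneg_left ih hα).trans (hf _)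

theorem le_of_bddAbove_range_iterate (hα : 1 < α) (hf : ∀ x, α * (h x - B) ≤ h (f x) - B)
    {x : X} (hx : BddAbove (Set.range fun n => h (f^[n] x))) : h x ≤ B := by
  obtain ⟨M, hM⟩ := hx
  by_contra! hB
  have hpos : 0 < h x - B := sub_pos.mpr hB
  obtain ⟨n, hn⟩ := pow_unbounded_of_one_lt ((M - B) / (h x - B)) hα
  rw [div_lt_iff₀ hpos] at hn
  have hiter := pow_mul_sub_le_iterate_sub (zero_le_one.trans hα.le) hf x n
  have horbit : h (f^[n] x) ≤ M := hM ⟨n, rfl⟩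
  linarith

theorem IsPreperiodic.bddAbove_range_iterate {x : X} (hx : IsPreperiodic f x) :
    BddAbove (Set.range fun n => h (f^[n] x)) := by
  rw [Set.range_comp' h]
  exact (hx.image h).bddAbove

end Iterate

section Height

variable {Point Pic : Type*} [AddCommGroup Pic] {IsAmple : Pic → Prop} {height : Pic → Point → ℝ}

theorem exists_height_le_add_of_isAmple_sub
    (height_add : ∀ D E : Pic, ∃ C : ℝ, ∀ P : Point,
      |height (D + E) P - (height D P + height E P)| ≤ C)
    (height_lower : ∀ D : Pic, IsAmple D → ∃ C : ℝ, ∀ P : Point, -C ≤ height D P)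
    {D D' : Pic} (hD : IsAmple (D' - D)) :
    ∃ C : ℝ, ∀ P, height D P ≤ height D' P + C := by
  obtain ⟨C₁, hC₁⟩ := height_add D (D' - D)
  obtain ⟨C₂, hC₂⟩ := height_lower _ hD
  refine ⟨C₁ + C₂, fun P => ?_⟩
  have hsum := (abs_le.mp (hC₁ P)).1
  rw [add_sub_cancel] at hsum
  linarith [hC₂ P]

variable [Module ℝ Pic]

theorem exists_height_expanding
    (height_add : ∀ D E : Pic, ∃ C : ℝ, ∀ P : Point,
      |height (D + E) P - (height D P + height E P)| ≤ C)
    (height_smul : ∀ (t : ℝ) (D : Pic), ∃ C : ℝ, ∀ P : Point,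
      |height (t • D) P - t * height D P| ≤ C)
    (height_lower : ∀ D : Pic, IsAmple D → ∃ C : ℝ, ∀ P : Point, -C ≤ height D P)
    {φ : Point → Point} {φpull : Pic →ₗ[ℝ] Pic}
    (height_pull : ∀ D : Pic, ∃ C : ℝ, ∀ P : Point,
      |height D (φ P) - height (φpull D) P| ≤ C)
    {D : Pic} {α : ℝ} (hα : 1 < α) (hA : IsAmple (φpull D - α • D)) :
    ∃ B : ℝ, ∀ P, α * (height D P - B) ≤ height D (φ P) - B := by
  obtain ⟨C₁, hC₁⟩ := exists_height_le_add_of_isAmple_sub height_add height_lower hA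
  obtain ⟨C₂, hC₂⟩ := height_smul α D
  obtain ⟨C₃, hC₃⟩ := height_pull D
  set C := C₁ + C₂ + C₃
  have hexpand : ∀ P, α * height D P - C ≤ height D (φ P) := fun P => by
    linarith [hC₁ P, (abs_le.mp (hC₂ P)).1, (abs_le.mp (hC₃ P)).1]
  refine ⟨C / (α - 1), fun P => ?_⟩
  have hB : α * (C / (α - 1)) - C / (α - 1) = C := by
    field_simp [(sub_pos.mpr hα).ne']
  linarith [hexpand P]

theorem exists_smul_height_le_add_of_isAmple
    (isAmple_open : ∀ {D : Pic} (E : Pic), IsAmple D →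
      ∃ ε > 0, ∀ t : ℝ, |t| ≤ ε → IsAmple (D + t • E))
    (height_add : ∀ D E : Pic, ∃ C : ℝ, ∀ P : Point,
      |height (D + E) P - (height D P + height E P)| ≤ C)
    (height_smul : ∀ (t : ℝ) (D : Pic), ∃ C : ℝ, ∀ P : Point,
      |height (t • D) P - t * height D P| ≤ C)
    (height_lower : ∀ D : Pic, IsAmple D → ∃ C : ℝ, ∀ P : Point, -C ≤ height D P)
    {D : Pic} (hD : IsAmple D) (E : Pic) :
    ∃ ε > 0, ∃ C : ℝ, ∀ P, ε * height E P ≤ height D P + C := by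
  obtain ⟨ε, hε, hopen⟩ := isAmple_open E hD
  have hA : IsAmple (D - ε • E) := by
    simpa [neg_smul, ← sub_eq_add_neg] using hopen (-ε) (by rw [abs_neg, abs_of_pos hε])
  obtain ⟨C₁, hC₁⟩ := exists_height_le_add_of_isAmple_sub height_add height_lower hA
  obtain ⟨C₂, hC₂⟩ := height_smul ε E
  exact ⟨ε, hε, C₁ + C₂, fun P => by linarith [hC₁ P, (abs_le.mp (hC₂ P)).1]⟩

end Height

theorem preperiodic_bounded_height_of_globalCoeff_gt_one_general
    {Point : Type*}
    {Pic : Type*} [AddCommGroup Pic] [Module ℝ Pic]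
    (IsAmple : Pic → Prop)
    (isAmple_open : ∀ {D : Pic} (E : Pic), IsAmple D →
      ∃ ε > 0, ∀ t : ℝ, |t| ≤ ε → IsAmple (D + t • E))
    (height : Pic → Point → ℝ)
    (height_add : ∀ D E : Pic, ∃ C : ℝ, ∀ P : Point,
      |height (D + E) P - (height D P + height E P)| ≤ C)
    (height_smul : ∀ (t : ℝ) (D : Pic), ∃ C : ℝ, ∀ P : Point,
      |height (t • D) P - t * height D P| ≤ C)
    (height_lower : ∀ D : Pic, IsAmple D → ∃ C : ℝ, ∀ P : Point, -C ≤ height D P)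
    (φ : Point → Point)
    (φpull : Pic →ₗ[ℝ] Pic)
    (height_pull : ∀ D : Pic, ∃ C : ℝ, ∀ P : Point,
      |height D (φ P) - height (φpull D) P| ≤ C)
    (hμ : 1 < globalHeightExpansionCoeff IsAmple φpull) :
    ∀ E : Pic, IsAmple E → ∃ B : ℝ, ∀ P : Point, IsPreperiodic φ P → height E P ≤ B := by
  intro E _
  obtain ⟨D, hD, hμD⟩ := exists_isAmple_one_lt_heightExpansionCoeff hμ
  obtain ⟨α, hα, hA⟩ := exists_one_lt_isAmple_pull_sub_smul hμD
  obtain ⟨B, hexpand⟩ :=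
    exists_height_expanding height_add height_smul height_lower height_pull hα hA
  obtain ⟨ε, hε, C, hcomp⟩ :=
    exists_smul_height_le_add_of_isAmple isAmple_open height_add height_smul height_lower hD E
  refine ⟨(B + C) / ε, fun P hP => ?_⟩
  have hDP : height D P ≤ B := le_of_bddAbove_range_iterate hα hexpand hP.bddAbove_range_iterate
  rw [le_div_iff₀ hε]
  linarith [hcomp P]

/-- Let `φ : W → W` be a dominant endomorphism of a projective variety `W`
defined over a number field `K`, and suppose the global height expansion coefficient
satisfies `μ(φ) > 1`.  Then for every ample divisor `E` on `W`, the set of preperiodic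
points of `φ` is a set of bounded height with respect to `h_E`. -/
theorem preperiodic_bounded_height_of_globalCoeff_gt_one
    {Point : Type*} [TopologicalSpace Point]
    {Pic : Type*} [AddCommGroup Pic] [Module ℝ Pic]
    (IsAmple : Pic → Prop)
    (isAmple_add : ∀ {D E : Pic}, IsAmple D → IsAmple E → IsAmple (D + E))
    (isAmple_smul : ∀ {D : Pic} {t : ℝ}, 0 < t → IsAmple D → IsAmple (t • D))
    (isAmple_open : ∀ {D : Pic} (E : Pic), IsAmple D →
      ∃ ε > 0, ∀ t : ℝ, |t| ≤ ε → IsAmple (D + t • E))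
    (height : Pic → Point → ℝ)
    (height_add : ∀ D E : Pic, ∃ C : ℝ, ∀ P : Point,
      |height (D + E) P - (height D P + height E P)| ≤ C)
    (height_smul : ∀ (t : ℝ) (D : Pic), ∃ C : ℝ, ∀ P : Point,
      |height (t • D) P - t * height D P| ≤ C)
    (height_lower : ∀ D : Pic, IsAmple D → ∃ C : ℝ, ∀ P : Point, -C ≤ height D P)
    (φ : Point → Point) (hφcont : Continuous φ) (hφdom : DenseRange φ)
    (φpull : Pic →ₗ[ℝ] Pic)
    (height_pull : ∀ D : Pic, ∃ C : ℝ, ∀ P : Point,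
      |height D (φ P) - height (φpull D) P| ≤ C)
    (hμ : 1 < globalHeightExpansionCoeff IsAmple φpull) :
    ∀ E : Pic, IsAmple E → ∃ B : ℝ, ∀ P : Point, IsPreperiodic φ P → height E P ≤ B :=
  preperiodic_bounded_height_of_globalCoeff_gt_one_general IsAmple isAmple_open height height_add
    height_smul height_lower φ φpull height_pull hμ
end
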